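/- Let E be a real inner product space and F a real vector space. Suppose the velocity field has the form v(x, c) = w(x) + B(c), where w : E → E is Lipschitz continuous with constant L ≥ 0 and B : F → E is linear with B(c_uncond) = 0 and B(u) = g for some nonzero vector g ∈ E. Let A = s_high·β_high − s_low·β_low > 0, and for each step size δt > 0 define the reflective displacement Δ_RF(δt) = δt·( v(x_t, c_high) − v(x_{t−δt}, c_low) ), where x_{t−δt} = x_t − δt·v(x_t, c_high). Then there exists δt₀ > 0 such that for every δt with 0 < δt < δt₀, the reflective displacement satisfies ⟨Δ_RF(δt), g⟩ > 0; i.e., Δ_RF is an ascent direction for any objective whose gradient at x_t equals g. -/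
import Mathlib


open scoped RealInnerProductSpace

/-- Suppose `v(x, c) = w(x) + B(c)` with `w` `L`-Lipschitz (`L ≥ 0`) and
`B` linear satisfying `B(c_uncond) = 0` and `B(u) = g ≠ 0`, where
`u = c_text - c_uncond`. Let `A = s_high·β_high - s_low·β_low > 0`, and for `δt > 0`
set `Δ_RF(δt) = δt • (v(x_t, c_high) - v(x_{t-δt}, c_low))` with
`x_{t-δt} = x_t - δt • v(x_t, c_high)`. Then there exists `δt₀ > 0` such that for all
`0 < δt < δt₀`, `⟪Δ_RF(δt), g⟫ > 0`. -/
theorem reflective_displacement_ascent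
    {E F : Type*} [NormedAddCommGroup E] [InnerProductSpace ℝ E]
    [AddCommGroup F] [Module ℝ F]
    (v : E → F → E) (w : E → E) (B : F →ₗ[ℝ] E) (L : ℝ)
    (hL : 0 ≤ L)
    (hw : ∀ y z : E, ‖w y - w z‖ ≤ L * ‖y - z‖)
    (hv : ∀ x c, v x c = w x + B c)
    (c_text c_uncond : F) (g : E)
    (hBu : B c_uncond = 0) (hBg : B (c_text - c_uncond) = g) (hg : g ≠ 0)
    (s_high β_high s_low β_low : ℝ)
    (hA : 0 < s_high * β_high - s_low * β_low)
    (c_high c_low : F)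
    (hch : c_high = c_text + s_high • (β_high • c_text + (1 - β_high) • c_uncond))
    (hcl : c_low = c_text + s_low • (β_low • c_text + (1 - β_low) • c_uncond))
    (x_t : E) :
    ∃ δt₀ > (0:ℝ), ∀ δt : ℝ, 0 < δt → δt < δt₀ →
      0 < ⟪δt • (v x_t c_high - v (x_t - δt • v x_t c_high) c_low), g⟫ := by
  have hBtext : B c_text = g := by
    have h := hBg; rw [map_sub, hBu, sub_zero] at h; exact h
  set A := s_high * β_high - s_low * β_low with hAdef
  set V := v x_t c_high with hV
  set K := L * ‖V‖ * ‖g‖ with hK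
  have hK0 : 0 ≤ K := by positivity
  have hgpos : 0 < ‖g‖ := norm_pos_iff.mpr hg
  refine ⟨A * ‖g‖ ^ 2 / (K + 1), by positivity, ?_⟩
  intro δt hδt hδt'
  set x' := x_t - δt • V with hx'
  have hdiff : v x_t c_high - v x' c_low = (w x_t - w x') + A • g := by
    rw [hv, hv, hch, hcl]
    simp only [map_add, map_smul, hBu, hBtext, smul_zero, add_zero, hAdef]
    module
  rw [hdiff, real_inner_smul_left, inner_add_left, real_inner_smul_left,
    real_inner_self_eq_norm_sq]
  have hnorm : ‖x_t - x'‖ = δt * ‖V‖ := by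
    rw [hx']
    simp [norm_smul, abs_of_pos hδt]
  have hb : |⟪w x_t - w x', g⟫| ≤ K * δt := by
    calc |⟪w x_t - w x', g⟫| ≤ ‖w x_t - w x'‖ * ‖g‖ := abs_real_inner_le_norm _ _
      _ ≤ (L * ‖x_t - x'‖) * ‖g‖ := by
          gcongr; exact hw _ _
      _ = K * δt := by rw [hnorm, hK]; ring
  have hb' : -(K * δt) ≤ ⟪w x_t - w x', g⟫ := neg_le_of_abs_le hb
  have hlt : δt * (K + 1) < A * ‖g‖ ^ 2 := by
    rw [div_eq_mul_inv] at hδt'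
    have := (lt_div_iff₀ (by positivity : (0:ℝ) < K + 1)).mp (by
      rwa [div_eq_mul_inv])
    linarith
  have : K * δt < A * ‖g‖ ^ 2 := by nlinarith
  nlinarith
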